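/- arXiv:2510.05418 — 3 statements merged into one kernel-verified Lean document; each statement's English description precedes it below -/
import Mathlib

section
/- Let O be a complete DVR with uniformizer ϖ and let n ≥ 1. Consider A = {(a, b) ∈ O × O : a ≡ b mod ϖⁿ}. Then A is isomorphic as an O-algebra to O[[x]]/(x(x − ϖⁿ)). -/
/-!
Evaluation `p ↦ (p(0), p(π))` maps `O[X]` onto the pairs congruent modulo `π = ϖⁿ`, because
`π ∣ p(π) - p(0)`; as `π` is a non-zero-divisor its kernel is `(X(X - π))`. Since `π` lies in
the maximal ideal, `X(X - π)` is a distinguished polynomial, so by Weierstrass division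
`O[X]/(X(X - π)) ≅ O⟦X⟧/(X(X - π))`.
-/

open Polynomial Ideal

namespace Polynomial

variable {R : Type*} [CommRing R]

noncomputable def evalZeroProdEval (a : R) : R[X] →ₐ[R] R × R :=
  (aeval 0).prod (aeval a)

@[simp]
theorem evalZeroProdEval_apply (a : R) (p : R[X]) :
    evalZeroProdEval a p = (p.eval 0, p.eval a) := by
  simp [evalZeroProdEval, coe_aeval_eq_eval]

theorem mem_range_evalZeroProdEval_iff (a : R) (x : R × R) :
    x ∈ (evalZeroProdEval a).range ↔ a ∣ x.2 - x.1 := by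
  constructor
  · rintro ⟨p, rfl⟩
    simpa using sub_dvd_eval_sub a 0 p
  · rintro ⟨c, hc⟩
    refine ⟨C x.1 + C c * X, Prod.ext (by simp) ?_⟩
    simp only [AlgHom.toRingHom_eq_coe, RingHom.coe_coe, evalZeroProdEval_apply, eval_add, eval_C,
      eval_mul, eval_X]
    linear_combination -hc

theorem ker_evalZeroProdEval {a : R} (ha : IsLeftRegular a) :
    RingHom.ker (evalZeroProdEval a) = span {X * (X - C a)} := by
  ext p
  simp only [RingHom.mem_ker, evalZeroProdEval_apply, Prod.mk_eq_zero, mem_span_singleton]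
  constructor
  · rintro ⟨h0, ha'⟩
    obtain ⟨q, rfl⟩ : X ∣ p := X_dvd_iff.mpr (by rwa [coeff_zero_eq_eval_zero])
    have hq : q.IsRoot a := ha (by simpa using ha')
    exact mul_dvd_mul_left X (dvd_iff_isRoot.mpr hq)
  · rintro ⟨q, rfl⟩
    simp

noncomputable def quotientSpanXMulXSubCEquivRange {a : R} (ha : IsLeftRegular a) :
    (R[X] ⧸ span {X * (X - C a)}) ≃ₐ[R] (evalZeroProdEval a).range :=
  (quotientEquivAlgOfEq R (ker_evalZeroProdEval ha)).symm.trans (quotientKerEquivRange _)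

theorem isDistinguishedAt_X_mul_X_sub_C {I : Ideal R} {a : R} (ha : a ∈ I) :
    (X * (X - C a)).IsDistinguishedAt I := by
  refine .mul ⟨⟨fun {k} hk ↦ ?_⟩, monic_X⟩ ⟨⟨fun {k} hk ↦ ?_⟩, monic_X_sub_C a⟩
  · obtain rfl : k = 0 := by have := natDegree_X_le (R := R); omega
    simp
  · obtain rfl : k = 0 := by have := natDegree_X_sub_C_le a; omega
    simpa using ha

noncomputable def quotientSpanXMulXSubCEquivPowerSeries {I : Ideal R} [IsAdicComplete I R]
    {a : R} (ha : a ∈ I) :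
    (R[X] ⧸ span {X * (X - C a)}) ≃ₐ[R]
      PowerSeries R ⧸ span {PowerSeries.X * (PowerSeries.X - PowerSeries.C a)} :=
  (isDistinguishedAt_X_mul_X_sub_C ha).algEquivQuotient.trans
    (quotientEquivAlgOfEq R (by simp))

end Polynomial

theorem congruence_pair_algebra_iso
    (O : Type) [CommRing O] [IsDomain O] [IsDiscreteValuationRing O]
    [IsAdicComplete (IsLocalRing.maximalIdeal O) O]
    (ϖ : O) (hϖ : Irreducible ϖ) (n : ℕ) (hn : 1 ≤ n)
    -- `A` is the subalgebra of `O × O` of pairs congruent modulo `ϖⁿ`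
    (A : Subalgebra O (O × O))
    (hA : A = AlgHom.equalizer
      ((Ideal.Quotient.mkₐ O (Ideal.span {ϖ ^ n})).comp (AlgHom.fst O O O))
      ((Ideal.Quotient.mkₐ O (Ideal.span {ϖ ^ n})).comp (AlgHom.snd O O O))) :
    Nonempty (A ≃ₐ[O]
      (PowerSeries O ⧸ Ideal.span
        {PowerSeries.X * (PowerSeries.X - PowerSeries.C (ϖ ^ n))})) := by
  have hregular : IsLeftRegular (ϖ ^ n) := (IsRegular.of_ne_zero (pow_ne_zero n hϖ.ne_zero)).left
  have hmem : ϖ ^ n ∈ IsLocalRing.maximalIdeal O :=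
    pow_mem_of_mem _ hϖ.not_isUnit n (by omega)
  have hrange : (evalZeroProdEval (ϖ ^ n)).range = A := by
    ext x
    rw [mem_range_evalZeroProdEval_iff, hA, AlgHom.mem_equalizer]
    simp [Ideal.Quotient.eq, mem_span_singleton, ← dvd_neg (b := x.1 - x.2)]
  exact ⟨((quotientSpanXMulXSubCEquivRange hregular).trans
    (Subalgebra.equivOfEq _ _ hrange)).symm.trans (quotientSpanXMulXSubCEquivPowerSeries hmem)⟩
end

section
/- Let O be a complete DVR with uniformizer ϖ. Consider B = {(a, b, c) ∈ O × O × O : a ≡ b ≡ c mod ϖ}. Then B is isomorphic as an O-algebra to O[[x, y]]/(x(x − ϖ), y(y − ϖ), xy). -/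
/-!
Evaluation at the three points `(ϖ, 0)`, `(0, ϖ)`, `(0, 0)` is an `O`-algebra map
`O⟦x, y⟧ → O × O × O` killing `x(x - ϖ)`, `y(y - ϖ)` and `xy`. Evaluating along an axis makes
sense because Weierstrass division over the complete ring `O` identifies `O⟦x⟧/(x(x - ϖ))` with
`O[x]/(x(x - ϖ))`. The values at the three points are congruent to the constant term mod `ϖ`,
and `c + tx + uy ↦ (c + tϖ, c + uϖ, c)` hits every congruent triple. The same division shows that
modulo the relations every series is congruent to some `c + tx + uy`, which pins down the kernel.
-/

open scoped Polynomial PowerSeries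

open Polynomial in
theorem Polynomial.isDistinguishedAt_X_mul_X_sub_C_s7 {R : Type*} [CommRing R] {I : Ideal R}
    {a : R} (ha : a ∈ I) : (X * (X - C a)).IsDistinguishedAt I := by
  refine .mul ⟨⟨fun hn => ?_⟩, monic_X⟩ ⟨⟨fun hn => ?_⟩, monic_X_sub_C a⟩
  · obtain rfl : _ = 0 := Nat.lt_one_iff.mp (hn.trans_le natDegree_X_le)
    simp
  · obtain rfl : _ = 0 := Nat.lt_one_iff.mp (hn.trans_le (natDegree_X_sub_C_le a))
    simpa using ha

namespace PowerSeries

variable {A : Type*} [CommRing A] {I : Ideal A} [IsAdicComplete I A] {a : A}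

/-- Evaluation at `a`, through `A⟦X⟧ ⧸ (X (X - a)) ≃ A[X] ⧸ (X (X - a))`. -/
noncomputable def evalAt (ha : a ∈ I) : A⟦X⟧ →ₐ[A] A :=
  (Ideal.Quotient.liftₐ _ (Polynomial.aeval a) fun q hq => by
      obtain ⟨r, rfl⟩ := Ideal.mem_span_singleton'.mp hq
      simp).comp <|
    (Polynomial.isDistinguishedAt_X_mul_X_sub_C_s7 ha).algEquivQuotient.symm.toAlgHom.comp
      (Ideal.Quotient.mkₐ A _)

theorem evalAt_coe (ha : a ∈ I) (q : A[X]) : evalAt ha q = q.eval a := by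
  have : (Polynomial.isDistinguishedAt_X_mul_X_sub_C_s7 ha).algEquivQuotient.symm
      (Ideal.Quotient.mk _ q) = Ideal.Quotient.mk _ q := by
    rw [AlgEquiv.symm_apply_eq]
    rfl
  simp [evalAt, this]

theorem evalAt_X (ha : a ∈ I) : evalAt ha X = a := by
  simpa using evalAt_coe ha Polynomial.X

theorem evalAt_C (ha : a ∈ I) (c : A) : evalAt ha (C c) = c := by
  simpa using evalAt_coe ha (Polynomial.C c)

theorem dvd_evalAt_sub_constantCoeff (ha : a ∈ I) (f : A⟦X⟧) :
    a ∣ evalAt ha f - constantCoeff f := by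
  nth_rw 1 [eq_X_mul_shift_add_const f]
  simp [evalAt_X, evalAt_C]

theorem exists_sub_C_add_C_mul_X_mem_span (ha : a ∈ I) (f : A⟦X⟧) :
    ∃ b c : A, f - (C b + C c * X) ∈ Ideal.span {X * (X - C a)} := by
  nontriviality A
  set p : A[X] := Polynomial.X * (Polynomial.X - Polynomial.C a)
  have hp := Polynomial.isDistinguishedAt_X_mul_X_sub_C_s7 (I := I) ha
  obtain ⟨q, hq⟩ :=
    Ideal.Quotient.mk_surjective (hp.algEquivQuotient.symm (Ideal.Quotient.mk _ f))
  set r := q %ₘ p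
  have hr : r = Polynomial.C (r.coeff 1) * Polynomial.X + Polynomial.C (r.coeff 0) := by
    refine Polynomial.eq_X_add_C_of_degree_le_one (Order.le_of_lt_succ ?_)
    exact (Polynomial.degree_modByMonic_lt q hp.monic).trans_le <|
      (Polynomial.degree_mul_le _ _).trans
        (add_le_add Polynomial.degree_X_le (Polynomial.degree_X_sub_C_le a))
  refine ⟨r.coeff 0, r.coeff 1, ?_⟩
  have hqr : Ideal.Quotient.mk (Ideal.span {p}) q = Ideal.Quotient.mk _ r := by
    rw [Ideal.Quotient.eq, Ideal.mem_span_singleton, ← Polynomial.modByMonic_add_div q p]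
    simp [r]
  have hfr : Ideal.Quotient.mk _ f = Ideal.Quotient.mk (Ideal.span {(p : A⟦X⟧)}) (r : A⟦X⟧) := by
    rw [← hp.algEquivQuotient.apply_symm_apply (Ideal.Quotient.mk _ f), ← hq, hqr]
    rfl
  rw [Ideal.Quotient.eq, hr] at hfr
  simpa [p, add_comm] using hfr

end PowerSeries

namespace MvPowerSeries

open PowerSeries (toMvPowerSeries)
open Function (Embedding)

theorem X_dvd_sub_rename_killCompl {σ τ R : Type*} [CommRing R] {e : σ ↪ τ} {j : τ}
    (he : Set.range e = {j}ᶜ) (F : MvPowerSeries τ R) : X j ∣ F - rename e (killCompl e F) := by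
  refine X_dvd_iff.mpr fun d hd => ?_
  have hsupp : ↑d.support ⊆ Set.range e := by
    rw [he]
    rintro k hk rfl
    exact Finsupp.mem_support_iff.mp hk hd
  rw [map_sub, ← Finsupp.embDomain_comapDomain hsupp, coeff_embDomain_rename, coeff_killCompl,
    sub_self]

theorem constantCoeff_killCompl {σ τ R : Type*} [CommSemiring R] (e : τ ↪ σ)
    (F : MvPowerSeries σ R) : constantCoeff (killCompl e F) = constantCoeff F := by
  rw [← coeff_zero_eq_constantCoeff_apply, coeff_killCompl, Finsupp.embDomain_zero,
    coeff_zero_eq_constantCoeff_apply]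

variable {A : Type*} [CommRing A]

noncomputable def threePointIdeal (a : A) : Ideal (MvPowerSeries (Fin 2) A) :=
  Ideal.span {X 0 * (X 0 - C a), X 1 * (X 1 - C a), X 0 * X 1}

theorem map_toMvPowerSeries_span_le (a : A) (i : Fin 2) :
    (Ideal.span {PowerSeries.X * (PowerSeries.X - PowerSeries.C a)}).map (toMvPowerSeries i) ≤
      threePointIdeal a := by
  rw [Ideal.map_span, Set.image_singleton, Ideal.span_singleton_le_iff_mem]
  fin_cases i <;> exact Ideal.subset_span (by simp)

variable {I : Ideal A} [IsAdicComplete I A] {a : A}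

theorem exists_sub_linear_mem_threePointIdeal (ha : a ∈ I) (F : MvPowerSeries (Fin 2) A) :
    ∃ c t u : A, F - (C c + C t * X 0 + C u * X 1) ∈ threePointIdeal a := by
  -- `F = F(x, 0) + y G` and `G = G(0, y) + x K`
  obtain ⟨G, hG⟩ := X_dvd_sub_rename_killCompl (e := Embedding.punit 0) (j := 1)
    (by ext k; fin_cases k <;> simp [Embedding.punit]) F
  obtain ⟨K, hK⟩ := X_dvd_sub_rename_killCompl (e := Embedding.punit 1) (j := 0)
    (by ext k; fin_cases k <;> simp [Embedding.punit]) G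
  obtain ⟨b₀, c₀, h₀⟩ :=
    PowerSeries.exists_sub_C_add_C_mul_X_mem_span ha (killCompl (Embedding.punit 0) F : A⟦X⟧)
  obtain ⟨b₁, c₁, h₁⟩ := PowerSeries.exists_sub_C_add_C_mul_X_mem_span ha
    (PowerSeries.X * (killCompl (Embedding.punit 1) G : A⟦X⟧))
  have hxy : X 0 * X 1 * K ∈ threePointIdeal a :=
    Ideal.mul_mem_right _ _ (Ideal.subset_span (by simp))
  refine ⟨b₀ + b₁, c₀, c₁, ?_⟩
  convert add_mem (add_mem (map_toMvPowerSeries_span_le a 0 (Ideal.mem_map_of_mem _ h₀))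
    (map_toMvPowerSeries_span_le a 1 (Ideal.mem_map_of_mem _ h₁))) hxy using 1
  simp only [map_sub, map_add, map_mul, PowerSeries.toMvPowerSeries_C,
    PowerSeries.toMvPowerSeries_X]
  change _ = rename (Embedding.punit 0) _ - _ + (X 1 * rename (Embedding.punit 1) _ - _) + _
  linear_combination hG + X 1 * hK

/-- `F ↦ F(a • eᵢ)`. -/
noncomputable def evalOnAxis (ha : a ∈ I) {σ : Type*} (i : σ) : MvPowerSeries σ A →ₐ[A] A :=
  (PowerSeries.evalAt ha).comp (killCompl (Embedding.punit i) : MvPowerSeries σ A →ₐ[A] A⟦X⟧)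

section evalOnAxis

variable (ha : a ∈ I) {σ : Type*}

theorem evalOnAxis_X_self (i : σ) : evalOnAxis ha i (X i) = a := by
  rw [evalOnAxis, AlgHom.comp_apply, show X i = X (Embedding.punit.{_, 1} i PUnit.unit) from rfl,
    killCompl_X]
  exact PowerSeries.evalAt_X ha

theorem evalOnAxis_X_of_ne {i j : σ} (h : j ≠ i) : evalOnAxis ha i (X j) = 0 := by
  rw [evalOnAxis, AlgHom.comp_apply, killCompl_X_eq_zero (by simpa [Embedding.punit] using h),
    map_zero]

theorem evalOnAxis_C (i : σ) (c : A) : evalOnAxis ha i (C c) = c :=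
  (evalOnAxis ha i).commutes c

theorem dvd_evalOnAxis_sub_constantCoeff (i : σ) (F : MvPowerSeries σ A) :
    a ∣ evalOnAxis ha i F - constantCoeff F := by
  rw [← constantCoeff_killCompl (Embedding.punit.{_, 1} i)]
  exact PowerSeries.dvd_evalAt_sub_constantCoeff ha (killCompl _ F)

end evalOnAxis

/-- Evaluation at `(a, 0)`, `(0, a)` and `(0, 0)`. -/
noncomputable def evalThreePoints (ha : a ∈ I) : MvPowerSeries (Fin 2) A →ₐ[A] A × A × A :=
  (evalOnAxis ha 0).prod ((evalOnAxis ha 1).prod (evalOnAxis I.zero_mem 0))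

section evalThreePoints

variable (ha : a ∈ I)

theorem evalThreePoints_linear (c t u : A) :
    evalThreePoints ha (C c + C t * X 0 + C u * X 1) = (c + t * a, c + u * a, c) := by
  simp [evalThreePoints, evalOnAxis_C, evalOnAxis_X_self, evalOnAxis_X_of_ne]

theorem threePointIdeal_le_ker : threePointIdeal a ≤ RingHom.ker (evalThreePoints ha) := by
  rw [threePointIdeal, Ideal.span_le]
  rintro _ (rfl | rfl | rfl) <;>
    simp [evalThreePoints, evalOnAxis_C, evalOnAxis_X_self, evalOnAxis_X_of_ne]

theorem mem_range_evalThreePoints_iff (p : A × A × A) :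
    p ∈ (evalThreePoints ha).range ↔ a ∣ p.1 - p.2.1 ∧ a ∣ p.1 - p.2.2 := by
  rw [AlgHom.mem_range]
  constructor
  · rintro ⟨F, rfl⟩
    have h₀ := dvd_evalOnAxis_sub_constantCoeff ha 0 F
    have h₁ := dvd_evalOnAxis_sub_constantCoeff ha 1 F
    have hc := zero_dvd_iff.mp (dvd_evalOnAxis_sub_constantCoeff I.zero_mem 0 F)
    rw [sub_eq_zero] at hc
    simp only [evalThreePoints, AlgHom.prod_apply, hc]
    exact ⟨by simpa using dvd_sub h₀ h₁, h₀⟩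
  · rintro ⟨⟨s, hs⟩, ⟨t, ht⟩⟩
    refine ⟨C p.2.2 + C t * X 0 + C (t - s) * X 1, ?_⟩
    rw [evalThreePoints_linear]
    ext
    · linear_combination -ht
    · linear_combination hs - ht
    · rfl

theorem ker_evalThreePoints [IsDomain A] (ha0 : a ≠ 0) :
    RingHom.ker (evalThreePoints ha) = threePointIdeal a := by
  refine le_antisymm (fun F hF => ?_) (threePointIdeal_le_ker ha)
  obtain ⟨c, t, u, hF'⟩ := exists_sub_linear_mem_threePointIdeal ha F
  have hlin := threePointIdeal_le_ker ha hF'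
  rw [RingHom.mem_ker, map_sub, hF, zero_sub, neg_eq_zero, evalThreePoints_linear,
    Prod.mk_eq_zero, Prod.mk_eq_zero] at hlin
  obtain ⟨h₀, h₁, rfl⟩ := hlin
  obtain rfl : t = 0 := by simpa [ha0] using h₀
  obtain rfl : u = 0 := by simpa [ha0] using h₁
  simpa using hF'

end evalThreePoints

end MvPowerSeries

open MvPowerSeries in
theorem congruence_triple_algebra_iso
    (O : Type) [CommRing O] [IsDomain O] [IsDiscreteValuationRing O]
    [IsAdicComplete (IsLocalRing.maximalIdeal O) O]
    (ϖ : O) (hϖ : Irreducible ϖ)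
    -- the three coordinate maps `O × O × O → O/(ϖ)`
    (f₁ f₂ f₃ : (O × O × O) →ₐ[O] (O ⧸ Ideal.span {ϖ}))
    (hf₁ : f₁ = (Ideal.Quotient.mkₐ O (Ideal.span {ϖ})).comp (AlgHom.fst O O (O × O)))
    (hf₂ : f₂ = (Ideal.Quotient.mkₐ O (Ideal.span {ϖ})).comp
      ((AlgHom.fst O O O).comp (AlgHom.snd O O (O × O))))
    (hf₃ : f₃ = (Ideal.Quotient.mkₐ O (Ideal.span {ϖ})).comp
      ((AlgHom.snd O O O).comp (AlgHom.snd O O (O × O))))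
    -- `B` is the subalgebra of triples that are pairwise congruent mod `ϖ`
    (B : Subalgebra O (O × O × O))
    (hB : B = AlgHom.equalizer f₁ f₂ ⊓ AlgHom.equalizer f₁ f₃) :
    Nonempty (B ≃ₐ[O]
      (MvPowerSeries (Fin 2) O ⧸ Ideal.span
        {MvPowerSeries.X 0 * (MvPowerSeries.X 0 - MvPowerSeries.C (σ := Fin 2) (R := O) ϖ),
         MvPowerSeries.X 1 * (MvPowerSeries.X 1 - MvPowerSeries.C (σ := Fin 2) (R := O) ϖ),
         MvPowerSeries.X 0 * MvPowerSeries.X 1})) := by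
  have hϖm : ϖ ∈ IsLocalRing.maximalIdeal O := hϖ.not_isUnit
  let Φ := evalThreePoints hϖm
  have hB_range : B = Φ.range := by
    ext p
    rw [mem_range_evalThreePoints_iff, hB, Algebra.mem_inf, AlgHom.mem_equalizer,
      AlgHom.mem_equalizer, hf₁, hf₂, hf₃]
    simp [Ideal.Quotient.eq, Ideal.mem_span_singleton]
  exact ⟨(Subalgebra.equivOfEq _ _ hB_range).trans <| (Ideal.quotientKerEquivRange Φ).symm.trans <|
    Ideal.quotientEquivAlgOfEq O (ker_evalThreePoints hϖm hϖ.ne_zero)⟩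
end

section
/- Let O be a complete DVR with fraction field K and let R be a commutative O-algebra acting on a finitely generated torsion-free O-module L, equipped with an R-equivariant perfect O-bilinear pairing R × L → O (i.e., identifying L ≅ Hom_O(R, O) as R-modules). If L/m_R L ≅ k for the maximal ideal m_R of the local ring R with residue field k, then L is free of rank 1 over R. -/
/-!
Nakayama turns `L / m_R L ≅ k` into a generator `x` of `L` over `R`, so `r ↦ r • x` is a
surjection `R → L` whose kernel is the annihilator of `L`. Equivariance gives
`⟨r, l⟩ = ⟨1, r • l⟩`, so an `r` killing `L` pairs to zero with everything; by perfectness `r = 0`.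
-/

open IsLocalRing Submodule

theorem IsLocalRing.exists_span_singleton_eq_top_of_quotient_equiv_residueField
    {R M : Type*} [CommRing R] [IsLocalRing R] [AddCommGroup M] [Module R M] [Module.Finite R M]
    (e : (M ⧸ maximalIdeal R • (⊤ : Submodule R M)) ≃ₗ[R] ResidueField R) :
    ∃ x : M, span R {x} = ⊤ := by
  obtain ⟨x, hx⟩ := mkQ_surjective _ (e.symm 1)
  refine ⟨x, (map_mkQ_eq_top (R := R)).1 ?_⟩
  rw [map_span, Set.image_singleton, span_singleton_eq_top_iff]
  intro v
  obtain ⟨r, hr⟩ := residue_surjective (e v)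
  refine ⟨r, e.injective ?_⟩
  rw [map_smul, hx, e.apply_symm_apply, ← hr, Algebra.smul_def, mul_one,
    ResidueField.algebraMap_eq]

theorem Module.annihilator_eq_bot_of_injective_pairing {O R L : Type*} [CommSemiring O]
    [CommSemiring R] [Algebra O R] [AddCommMonoid L] [Module O L] [Module R L]
    (B : R →ₗ[O] L →ₗ[O] O) (hB : Function.Injective B)
    (hequiv : ∀ (r s : R) (l : L), B (r * s) l = B s (r • l)) :
    Module.annihilator R L = ⊥ := by
  refine (Submodule.eq_bot_iff _).2 fun r hr ↦ hB ?_
  ext l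
  rw [← mul_one r, hequiv, Module.mem_annihilator.1 hr, map_zero, map_zero, LinearMap.zero_apply]

noncomputable def LinearEquiv.ofSpanSingletonEqTop {R M : Type*} [CommRing R] [AddCommGroup M]
    [Module R M] {x : M} (hx : span R {x} = ⊤) (hM : Module.annihilator R M = ⊥) : R ≃ₗ[R] M :=
  .ofBijective (LinearMap.toSpanSingleton R M x)
    ⟨by rw [← LinearMap.ker_eq_bot, ← annihilator_span_singleton, hx, annihilator_top, hM],
     by rw [← LinearMap.range_eq_top, LinearMap.range_toSpanSingleton, hx]⟩

theorem free_rank_one_of_perfect_pairing_general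
    (O : Type) [CommRing O]
    (R : Type) [CommRing R] [IsLocalRing R] [Algebra O R]
    (L : Type) [AddCommGroup L] [Module O L] [Module.Finite O L]
    [Module R L] [IsScalarTower O R L]
    -- the pairing `R × L → O`
    (B : R →ₗ[O] L →ₗ[O] O)
    -- `R`-equivariance: `⟨rs, l⟩ = ⟨s, r • l⟩`
    (hequiv : ∀ (r s : R) (l : L), B (r * s) l = B s (r • l))
    -- perfectness: the induced maps `L → Hom_O(R, O)` and `R → Hom_O(L, O)` are bijective
    (hperf₂ : Function.Bijective (B : R →ₗ[O] (L →ₗ[O] O)))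
    -- `L / m_R L ≅ k`
    (hcyc : Nonempty ((L ⧸ (IsLocalRing.maximalIdeal R • (⊤ : Submodule R L))) ≃ₗ[R]
      IsLocalRing.ResidueField R)) :
    Nonempty (L ≃ₗ[R] R) := by
  obtain ⟨e⟩ := hcyc
  have : Module.Finite R L := .of_restrictScalars_finite O R L
  obtain ⟨x, hx⟩ := exists_span_singleton_eq_top_of_quotient_equiv_residueField e
  have hann : Module.annihilator R L = ⊥ :=
    Module.annihilator_eq_bot_of_injective_pairing B hperf₂.injective hequiv
  exact ⟨(LinearEquiv.ofSpanSingletonEqTop hx hann).symm⟩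

theorem free_rank_one_of_perfect_pairing
    (O : Type) [CommRing O] [IsDomain O] [IsDiscreteValuationRing O]
    [IsAdicComplete (IsLocalRing.maximalIdeal O) O]
    (R : Type) [CommRing R] [IsNoetherianRing R] [IsLocalRing R] [Algebra O R]
    [IsAdicComplete (IsLocalRing.maximalIdeal R) R]
    [Module.Finite O R] (hRtf : Submodule.torsion O R = ⊥)
    (L : Type) [AddCommGroup L] [Module O L] [Module.Finite O L]
    (hLtf : Submodule.torsion O L = ⊥)
    [Module R L] [IsScalarTower O R L]
    -- the pairing `R × L → O`
    (B : R →ₗ[O] L →ₗ[O] O)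
    -- `R`-equivariance: `⟨rs, l⟩ = ⟨s, r • l⟩`
    (hequiv : ∀ (r s : R) (l : L), B (r * s) l = B s (r • l))
    -- perfectness: the induced maps `L → Hom_O(R, O)` and `R → Hom_O(L, O)` are bijective
    (hperf₁ : Function.Bijective (B.flip : L →ₗ[O] (R →ₗ[O] O)))
    (hperf₂ : Function.Bijective (B : R →ₗ[O] (L →ₗ[O] O)))
    -- `L / m_R L ≅ k`
    (hcyc : Nonempty ((L ⧸ (IsLocalRing.maximalIdeal R • (⊤ : Submodule R L))) ≃ₗ[R]
      IsLocalRing.ResidueField R)) :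
    Nonempty (L ≃ₗ[R] R) :=
  free_rank_one_of_perfect_pairing_general O R L B hequiv hperf₂ hcyc
end
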